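/- arXiv:cond-mat/0409047 — 2 statements merged into one kernel-verified Lean document; each statement's English description precedes it below -/
import Mathlib

section
/- Fix 0 < β ≤ log 4 and set K_c^{(2)}(β) := 1/(4βe^{−β}) + 1/(2β). Then: (a) for every 0 < K ≤ K_c^{(2)}(β), E_{β,K} = {ρ_β}; (b) for every K > K_c^{(2)}(β) there exist ν⁺ = ν⁺(β,K) and ν⁻ = ν⁻(β,K) in P with ν⁺ ≠ ν⁻, ν⁺ ≠ ρ_β, ν⁻ ≠ ρ_β, and E_{β,K} = {ν⁺, ν⁻}, where ν⁻ is obtained from ν⁺ by interchanging its components at −1 and at 1 (i.e. ν⁻₋₁ = ν⁺₁, ν⁻₀ = ν⁺₀, ν⁻₁ = ν⁺₋₁); (c) ν⁺ and ν⁻ can be chosen to depend continuously on K ∈ (K_c^{(2)}(β), ∞), and ν⁺ → ρ_β and ν⁻ → ρ_β as K → K_c^{(2)}(β)⁺. -/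
noncomputable section

/-- `μ = (μ₋₁, μ₀, μ₁)` is a probability vector on `Λ = {-1,0,1}`. -/
def IsProbVec (μ : ℝ × ℝ × ℝ) : Prop :=
  0 ≤ μ.1 ∧ 0 ≤ μ.2.1 ∧ 0 ≤ μ.2.2 ∧ μ.1 + μ.2.1 + μ.2.2 = 1

/-- Relative entropy `R(μ|ρ)` with respect to the uniform measure `ρ = (1/3,1/3,1/3)`
(the convention `0 · log 0 = 0` holds automatically since `Real.log 0 = 0`). -/
def relEntUnif (μ : ℝ × ℝ × ℝ) : ℝ :=
  μ.1 * Real.log (3 * μ.1) + μ.2.1 * Real.log (3 * μ.2.1) + μ.2.2 * Real.log (3 * μ.2.2)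

/-- `f_K(μ) = (μ₁ + μ₋₁) − K (μ₁ − μ₋₁)²`. -/
def fK (K : ℝ) (μ : ℝ × ℝ × ℝ) : ℝ :=
  (μ.2.2 + μ.1) - K * (μ.2.2 - μ.1) ^ 2

/-- The set `E_{β,K}` of canonical equilibrium macrostates: the minimizers of
`R(μ|ρ) + β f_K(μ)` over probability vectors. -/
def canonE (β K : ℝ) : Set (ℝ × ℝ × ℝ) :=
  {μ | IsProbVec μ ∧ ∀ ν, IsProbVec ν →
    relEntUnif μ + β * fK K μ ≤ relEntUnif ν + β * fK K ν}

/-- The measure `ρ_β` with `ρ_β(±1) = e^{−β}/(1+2e^{−β})` and `ρ_β(0) = 1/(1+2e^{−β})`. -/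
def rhoBeta (β : ℝ) : ℝ × ℝ × ℝ :=
  (Real.exp (-β) / (1 + 2 * Real.exp (-β)),
   1 / (1 + 2 * Real.exp (-β)),
   Real.exp (-β) / (1 + 2 * Real.exp (-β)))

/-- The second-order critical value `K_c^{(2)}(β) = 1/(4βe^{−β}) + 1/(2β)`. -/
def Kc2 (β : ℝ) : ℝ := 1 / (4 * β * Real.exp (-β)) + 1 / (2 * β)

/-!
Write `c = e^{-β}`, `m(ν) = ν₁ - ν₋₁`, `Z(x) = 1 + 2c cosh x`, and let `μₓ ∝ (c e^{-x}, 1, c eˣ)`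
be the tilted measures. By the Gibbs variational principle, for every tilt `x`,
`R(ν|ρ) + β f_K(ν) ≥ x m(ν) - log (Z(x)/3) - βK m(ν)²`, with equality only at `ν = μₓ`.
For `x = 2βK m(ν)` the right-hand side, as a concave quadratic in `m(ν)`, is maximal there, so it
dominates its value `h(x) = R(μₓ|ρ) + β f_K(μₓ)` at `m(μₓ)`. Hence `E_{β,K}` consists of the `μ_y`
with `y` a global minimizer of the even function `h`.

On `x > 0`, `h'(x)` has the sign of `K*(x) - K` with `K*(x) = x Z(x) / (4βc sinh x)`. For
`c ≥ 1/4`, i.e. `β ≤ log 4`, `K*` increases strictly from `K_c^{(2)}(β)` (at `0⁺`) to `∞`. So `h`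
is minimized only at `0` if `K ≤ K_c^{(2)}(β)`, and only at `±x⁺(K)` with `x⁺ = (K*)⁻¹` otherwise;
as the inverse of a strictly increasing function, `x⁺` is continuous and tends to `0` as
`K ↓ K_c^{(2)}(β)`.
-/

open Real Set Filter Topology Function InformationTheory

lemma pos_of_hasDerivAt_of_pos {f f' : ℝ → ℝ} (hf : ∀ x, HasDerivAt f (f' x) x) (h0 : f 0 = 0)
    (hf' : ∀ x, 0 < x → 0 < f' x) {x : ℝ} (hx : 0 < x) : 0 < f x := by
  have hmono : StrictMonoOn f (Ici 0) :=
    strictMonoOn_of_deriv_pos (convex_Ici 0) (fun y _ => (hf y).continuousAt.continuousWithinAt)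
      fun y hy => by
        rw [interior_Ici] at hy
        rw [(hf y).deriv]
        exact hf' y hy
  simpa [h0] using hmono (mem_Ici.2 le_rfl) (mem_Ici.2 hx.le) hx

namespace Real

lemma sinh_lt_mul_cosh {x : ℝ} (hx : 0 < x) : sinh x < x * cosh x := by
  have := pos_of_hasDerivAt_of_pos (f := fun y => y * cosh y - sinh y) (f' := fun y => y * sinh y)
    (fun y => (((hasDerivAt_id' y).mul (hasDerivAt_cosh y)).sub (hasDerivAt_sinh y)).congr_deriv
      (by ring))
    (by simp) (fun y hy => mul_pos hy (sinh_pos_iff.2 hy)) hx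
  linarith

lemma three_mul_sinh_lt_mul_cosh_add_two {x : ℝ} (hx : 0 < x) :
    3 * sinh x < x * (cosh x + 2) := by
  have hderiv : ∀ y, 0 < y → 0 < 2 - 2 * cosh y + y * sinh y :=
    fun y => pos_of_hasDerivAt_of_pos (f := fun y => 2 - 2 * cosh y + y * sinh y)
      (f' := fun y => y * cosh y - sinh y)
      (fun y => ((((hasDerivAt_cosh y).const_mul 2).const_sub 2).add
        ((hasDerivAt_id' y).mul (hasDerivAt_sinh y))).congr_deriv (by ring))
      (by simp) (fun y hy => by linarith [sinh_lt_mul_cosh hy])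
  have := pos_of_hasDerivAt_of_pos (f := fun y => y * (cosh y + 2) - 3 * sinh y)
    (fun y => (((hasDerivAt_id' y).mul ((hasDerivAt_cosh y).add_const 2)).sub
      ((hasDerivAt_sinh y).const_mul 3)).congr_deriv (by ring))
    (by simp) hderiv hx
  linarith

lemma mul_two_mul_cosh_add_one_lt {x : ℝ} (hx : 0 < x) :
    x * (2 * cosh x + 1) < sinh x * (cosh x + 2) := by
  have := pos_of_hasDerivAt_of_pos (f := fun y => sinh y * (cosh y + 2) - y * (2 * cosh y + 1))
    (f' := fun y => 2 * sinh y * (sinh y - y))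
    (fun y => (((hasDerivAt_sinh y).mul ((hasDerivAt_cosh y).add_const 2)).sub
      ((hasDerivAt_id' y).mul (((hasDerivAt_cosh y).const_mul 2).add_const 1))).congr_deriv
        (by linear_combination cosh_sq_sub_sinh_sq y))
    (by simp) (fun y hy => mul_pos (mul_pos two_pos (sinh_pos_iff.2 hy))
      (sub_pos.2 (self_lt_sinh_iff.2 hy))) hx
  linarith

end Real

section InverseFunction

variable {α γ : Type*} [LinearOrder α] [LinearOrder γ] [Nonempty α] {f : α → γ} {s : Set α}
  {t : Set γ}

lemma StrictMonoOn.strictMonoOn_invFunOn (hf : StrictMonoOn f s) (hsurj : SurjOn f s t) :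
    StrictMonoOn (invFunOn f s) t := by
  intro y₁ hy₁ y₂ hy₂ hy
  obtain ⟨hmem₁, heq₁⟩ := invFunOn_pos (hsurj hy₁)
  obtain ⟨hmem₂, heq₂⟩ := invFunOn_pos (hsurj hy₂)
  rwa [← hf.lt_iff_lt hmem₁ hmem₂, heq₁, heq₂]

end InverseFunction

section InverseFunctionReal

variable {f : ℝ → ℝ} {a b : ℝ}

lemma StrictMonoOn.continuousOn_invFunOn_Ioi (hf : StrictMonoOn f (Ioi a))
    (hmaps : MapsTo f (Ioi a) (Ioi b)) (hsurj : SurjOn f (Ioi a) (Ioi b)) :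
    ContinuousOn (invFunOn f (Ioi a)) (Ioi b) := by
  have hbij : BijOn (invFunOn f (Ioi a)) (Ioi b) (Ioi a) :=
    BijOn.symm (BijOn.mk hmaps hf.injOn hsurj).invOn_invFunOn.symm ⟨hmaps, hf.injOn, hsurj⟩
  intro y hy
  refine (StrictMonoOn.continuousAt_of_image_mem_nhds (hf.strictMonoOn_invFunOn hsurj)
    (Ioi_mem_nhds hy) ?_).continuousWithinAt
  rw [hbij.image_eq]
  exact Ioi_mem_nhds (hbij.mapsTo hy)

lemma StrictMonoOn.tendsto_invFunOn_nhdsGT (hf : StrictMonoOn f (Ioi a))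
    (hmaps : MapsTo f (Ioi a) (Ioi b)) (hsurj : SurjOn f (Ioi a) (Ioi b)) :
    Tendsto (invFunOn f (Ioi a)) (𝓝[>] b) (𝓝 a) := by
  refine tendsto_order.2 ⟨fun l hl => ?_, fun u hu => ?_⟩
  · filter_upwards [self_mem_nhdsWithin] with y hy
    exact hl.trans (invFunOn_pos (hsurj hy)).1
  · have hfu : b < f u := hmaps hu
    filter_upwards [Ioo_mem_nhdsGT hfu] with y hy
    have := hf.strictMonoOn_invFunOn hsurj hy.1 hfu hy.2
    rwa [hf.injOn.leftInvOn_invFunOn hu] at this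

end InverseFunctionReal

lemma setOf_forall_le_eq_pair_of_even {f : ℝ → ℝ} {t : ℝ} (ht : 0 ≤ t)
    (heven : ∀ x, f (-x) = f x) (hanti : StrictAntiOn f (Icc 0 t))
    (hmono : StrictMonoOn f (Ici t)) :
    {y | ∀ z, f y ≤ f z} = {t, -t} := by
  have hlt {z : ℝ} (hz : 0 ≤ z) (hzt : z ≠ t) : f t < f z := by
    rcases hzt.lt_or_gt with h | h
    · exact hanti ⟨hz, h.le⟩ ⟨ht, le_rfl⟩ h
    · exact hmono (mem_Ici.2 le_rfl) (mem_Ici.2 h.le) h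
  have habs (z : ℝ) : f |z| = f z := by
    rcases abs_choice z with h | h <;> simp [h, heven]
  have hmin (z : ℝ) : f t ≤ f z := by
    rw [← habs z]
    rcases eq_or_ne |z| t with h | h
    · rw [h]
    · exact (hlt (abs_nonneg z) h).le
  ext y
  simp only [mem_ofPred_eq, mem_insert_iff, mem_singleton_iff]
  constructor
  · intro hy
    refine (abs_eq ht).1 (not_not.1 fun h => ?_)
    have := hlt (abs_nonneg y) h
    rw [habs] at this
    exact (hy t).not_gt this
  · rintro (rfl | rfl)
    · exact hmin
    · simpa only [heven] using hmin

lemma mul_log_three_mul (a : ℝ) : a * log (3 * a) = a * log 3 + a * log a := by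
  rcases eq_or_ne a 0 with rfl | ha
  · simp
  · rw [log_mul three_ne_zero ha]
    ring

lemma mul_klFun_div (a : ℝ) {p : ℝ} (hp : p ≠ 0) :
    p * klFun (a / p) = a * log a - a * log p + p - a := by
  rcases eq_or_ne a 0 with rfl | ha
  · simp [klFun]
  · rw [klFun, log_div ha hp]
    field_simp

lemma mul_klFun_div_nonneg {a p : ℝ} (ha : 0 ≤ a) (hp : 0 < p) :
    0 ≤ p * klFun (a / p) :=
  mul_nonneg hp.le (klFun_nonneg (div_nonneg ha hp.le))

lemma eq_of_mul_klFun_div_nonpos {a p : ℝ} (ha : 0 ≤ a) (hp : 0 < p)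
    (h : p * klFun (a / p) ≤ 0) : a = p := by
  have hkl := klFun_nonneg (div_nonneg ha hp.le)
  have := (klFun_eq_zero_iff (div_nonneg ha hp.le)).1
    (le_antisymm (nonpos_of_mul_nonpos_right h hp) hkl)
  rwa [div_eq_one_iff_eq hp.ne'] at this

namespace BlumeCapel

def partitionFn (β x : ℝ) : ℝ := 1 + 2 * exp (-β) * cosh x

def tilted (β x : ℝ) : ℝ × ℝ × ℝ :=
  (exp (-β - x) / partitionFn β x, 1 / partitionFn β x, exp (-β + x) / partitionFn β x)

def mag (μ : ℝ × ℝ × ℝ) : ℝ := μ.2.2 - μ.1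

def tiltedMag (β x : ℝ) : ℝ := 2 * exp (-β) * sinh x / partitionFn β x

def freeEnergy (β K : ℝ) (μ : ℝ × ℝ × ℝ) : ℝ := relEntUnif μ + β * fK K μ

def gibbsBound (β K x m : ℝ) : ℝ := x * m - log (partitionFn β x / 3) - β * K * m ^ 2

def reducedFreeEnergy (β K x : ℝ) : ℝ := gibbsBound β K x (tiltedMag β x)

variable {β K x : ℝ}

lemma partitionFn_pos (β x : ℝ) : 0 < partitionFn β x := by
  unfold partitionFn
  have := cosh_pos x
  positivity

lemma partitionFn_neg (β x : ℝ) : partitionFn β (-x) = partitionFn β x := by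
  simp [partitionFn]

lemma exp_neg_sub_add_exp_neg_add (β x : ℝ) :
    exp (-β - x) + exp (-β + x) = 2 * exp (-β) * cosh x := by
  simp only [cosh_eq, sub_eq_add_neg, exp_add]
  ring

lemma exp_neg_add_sub_exp_neg_sub (β x : ℝ) :
    exp (-β + x) - exp (-β - x) = 2 * exp (-β) * sinh x := by
  simp only [sinh_eq, sub_eq_add_neg, exp_add]
  ring

lemma tilted_pos (β x : ℝ) :
    0 < (tilted β x).1 ∧ 0 < (tilted β x).2.1 ∧ 0 < (tilted β x).2.2 := by
  have hZ := partitionFn_pos β x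
  refine ⟨?_, ?_, ?_⟩ <;> (unfold tilted; positivity)

lemma isProbVec_tilted (β x : ℝ) : IsProbVec (tilted β x) := by
  have hZ := partitionFn_pos β x
  obtain ⟨h₁, h₂, h₃⟩ := tilted_pos β x
  refine ⟨h₁.le, h₂.le, h₃.le, ?_⟩
  simp only [tilted]
  field_simp
  rw [partitionFn]
  linear_combination exp_neg_sub_add_exp_neg_add β x

lemma mag_tilted (β x : ℝ) : mag (tilted β x) = tiltedMag β x := by
  simp only [mag, tilted, tiltedMag, ← exp_neg_add_sub_exp_neg_sub, sub_div]

lemma tilted_zero (β : ℝ) : tilted β 0 = rhoBeta β := by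
  simp [tilted, rhoBeta, partitionFn]

lemma tilted_neg (β x : ℝ) :
    tilted β (-x) = ((tilted β x).2.2, (tilted β x).2.1, (tilted β x).1) := by
  simp only [tilted, partitionFn_neg, sub_neg_eq_add, ← sub_eq_add_neg]

lemma tilted_injective (β : ℝ) : Injective (tilted β) := by
  intro x y h
  have hratio (z : ℝ) : (tilted β z).2.2 / (tilted β z).2.1 = exp (-β + z) := by
    simp only [tilted]
    field_simp [(partitionFn_pos β z).ne']
  have := congrArg (fun μ : ℝ × ℝ × ℝ => μ.2.2 / μ.2.1) h
  simp only [hratio, exp_eq_exp] at this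
  linarith

lemma continuous_tilted (β : ℝ) : Continuous (tilted β) := by
  have hZ (x : ℝ) := (partitionFn_pos β x).ne'
  unfold tilted partitionFn at *
  fun_prop (disch := exact hZ _)

lemma log_tilted (β x : ℝ) :
    log (tilted β x).1 = -β - x - log (partitionFn β x) ∧
    log (tilted β x).2.1 = -log (partitionFn β x) ∧
    log (tilted β x).2.2 = -β + x - log (partitionFn β x) := by
  have hZ := (partitionFn_pos β x).ne'
  simp only [tilted, log_div (exp_pos _).ne' hZ, log_div one_ne_zero hZ, log_exp, log_one,
    zero_sub, and_self]

lemma freeEnergy_sub_gibbsBound {ν : ℝ × ℝ × ℝ} (hν : IsProbVec ν) (x : ℝ) :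
    freeEnergy β K ν - gibbsBound β K x (mag ν) =
      (tilted β x).1 * klFun (ν.1 / (tilted β x).1) +
      (tilted β x).2.1 * klFun (ν.2.1 / (tilted β x).2.1) +
      (tilted β x).2.2 * klFun (ν.2.2 / (tilted β x).2.2) := by
  obtain ⟨-, -, -, hsum⟩ := hν
  obtain ⟨hpos₁, hpos₂, hpos₃⟩ := tilted_pos β x
  obtain ⟨hlog₁, hlog₂, hlog₃⟩ := log_tilted β x
  have htotal := (isProbVec_tilted β x).2.2.2
  rw [mul_klFun_div _ hpos₁.ne', mul_klFun_div _ hpos₂.ne', mul_klFun_div _ hpos₃.ne', hlog₁, hlog₂,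
    hlog₃, freeEnergy, gibbsBound, relEntUnif, fK, mag, mul_log_three_mul, mul_log_three_mul,
    mul_log_three_mul, log_div (partitionFn_pos β x).ne' three_ne_zero]
  linear_combination (log 3 - log (partitionFn β x) + 1) * hsum - htotal

lemma gibbsBound_le_freeEnergy {ν : ℝ × ℝ × ℝ} (hν : IsProbVec ν) (x : ℝ) :
    gibbsBound β K x (mag ν) ≤ freeEnergy β K ν := by
  have hsum := freeEnergy_sub_gibbsBound (β := β) (K := K) hν x
  obtain ⟨hpos₁, hpos₂, hpos₃⟩ := tilted_pos β x
  obtain ⟨hν₁, hν₂, hν₃, -⟩ := hν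
  linarith [mul_klFun_div_nonneg hν₁ hpos₁, mul_klFun_div_nonneg hν₂ hpos₂,
    mul_klFun_div_nonneg hν₃ hpos₃]

lemma eq_tilted_of_freeEnergy_le_gibbsBound {ν : ℝ × ℝ × ℝ} (hν : IsProbVec ν)
    (h : freeEnergy β K ν ≤ gibbsBound β K x (mag ν)) : ν = tilted β x := by
  have hsum := freeEnergy_sub_gibbsBound (β := β) (K := K) hν x
  obtain ⟨hpos₁, hpos₂, hpos₃⟩ := tilted_pos β x
  obtain ⟨hν₁, hν₂, hν₃, -⟩ := hν
  have k₁ := mul_klFun_div_nonneg hν₁ hpos₁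
  have k₂ := mul_klFun_div_nonneg hν₂ hpos₂
  have k₃ := mul_klFun_div_nonneg hν₃ hpos₃
  exact Prod.ext (eq_of_mul_klFun_div_nonpos hν₁ hpos₁ (by linarith))
    (Prod.ext (eq_of_mul_klFun_div_nonpos hν₂ hpos₂ (by linarith))
      (eq_of_mul_klFun_div_nonpos hν₃ hpos₃ (by linarith)))

lemma freeEnergy_tilted (β K x : ℝ) :
    freeEnergy β K (tilted β x) = reducedFreeEnergy β K x := by
  obtain ⟨hpos₁, hpos₂, hpos₃⟩ := tilted_pos β x
  have := freeEnergy_sub_gibbsBound (β := β) (K := K) (isProbVec_tilted β x) x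
  rw [div_self hpos₁.ne', div_self hpos₂.ne', div_self hpos₃.ne', klFun_one,
    mag_tilted] at this
  rw [reducedFreeEnergy]
  linarith

lemma reducedFreeEnergy_le_gibbsBound (hβK : 0 ≤ β * K) (m : ℝ) :
    reducedFreeEnergy β K (2 * β * K * m) ≤ gibbsBound β K (2 * β * K * m) m := by
  unfold reducedFreeEnergy gibbsBound
  nlinarith [mul_nonneg hβK (sq_nonneg (m - tiltedMag β (2 * β * K * m)))]

theorem canonE_eq_image_minimizers (hβK : 0 ≤ β * K) :
    canonE β K = tilted β '' {y | ∀ z, reducedFreeEnergy β K y ≤ reducedFreeEnergy β K z} := by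
  have hlower {ν : ℝ × ℝ × ℝ} (hν : IsProbVec ν) :
      reducedFreeEnergy β K (2 * β * K * mag ν) ≤ freeEnergy β K ν :=
    (reducedFreeEnergy_le_gibbsBound hβK _).trans (gibbsBound_le_freeEnergy hν _)
  ext ν
  constructor
  · rintro ⟨hν, hmin⟩
    have hmin' (z : ℝ) : freeEnergy β K ν ≤ reducedFreeEnergy β K z := by
      rw [← freeEnergy_tilted]
      exact hmin _ (isProbVec_tilted β z)
    refine ⟨2 * β * K * mag ν, fun z => (hlower hν).trans (hmin' z), ?_⟩
    exact (eq_tilted_of_freeEnergy_le_gibbsBound hν ((hmin' _).trans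
      (reducedFreeEnergy_le_gibbsBound hβK _))).symm
  · rintro ⟨y, hy, rfl⟩
    refine ⟨isProbVec_tilted β y, fun ν hν => ?_⟩
    change freeEnergy β K (tilted β y) ≤ freeEnergy β K ν
    rw [freeEnergy_tilted]
    exact (hy _).trans (hlower hν)

lemma one_div_four_le_exp_neg (hβ : β ≤ log 4) : 1 / 4 ≤ exp (-β) := by
  calc 1 / 4 = exp (-log 4) := by rw [exp_neg, exp_log four_pos, one_div]
    _ ≤ exp (-β) := exp_le_exp.2 (neg_le_neg hβ)

lemma Kc2_eq : Kc2 β = partitionFn β 0 / (4 * β * exp (-β)) := by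
  rw [Kc2, partitionFn, cosh_zero]
  field_simp
  ring

lemma Kc2_pos (hβ : 0 < β) : 0 < Kc2 β := by
  rw [Kc2]
  positivity

lemma continuous_partitionFn (β : ℝ) : Continuous (partitionFn β) := by
  unfold partitionFn
  fun_prop

lemma hasDerivAt_partitionFn (β x : ℝ) :
    HasDerivAt (partitionFn β) (2 * exp (-β) * sinh x) x :=
  ((hasDerivAt_cosh x).const_mul (2 * exp (-β))).const_add 1

lemma hasDerivAt_tiltedMag (β x : ℝ) :
    HasDerivAt (tiltedMag β)
      (2 * exp (-β) * (cosh x + 2 * exp (-β)) / partitionFn β x ^ 2) x := by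
  refine (((hasDerivAt_sinh x).const_mul (2 * exp (-β))).div (hasDerivAt_partitionFn β x)
    (partitionFn_pos β x).ne').congr_deriv ?_
  rw [partitionFn]
  congr 1
  linear_combination (4 * exp (-β) ^ 2) * cosh_sq_sub_sinh_sq x

lemma hasDerivAt_reducedFreeEnergy {m' : ℝ} (hm : HasDerivAt (tiltedMag β) m' x) :
    HasDerivAt (reducedFreeEnergy β K) (m' * (x - 2 * β * K * tiltedMag β x)) x := by
  have hZ := partitionFn_pos β x
  have hlog : HasDerivAt (fun y => log (partitionFn β y / 3)) (tiltedMag β x) x := by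
    refine ((hasDerivAt_partitionFn β x).div_const 3).log (by positivity) |>.congr_deriv ?_
    rw [tiltedMag]
    field_simp
  exact ((((hasDerivAt_id' x).mul hm).sub hlog).sub ((hm.pow 2).const_mul (β * K))).congr_deriv
    (by ring)

lemma continuous_reducedFreeEnergy (β K : ℝ) : Continuous (reducedFreeEnergy β K) :=
  continuous_iff_continuousAt.2 fun x =>
    (hasDerivAt_reducedFreeEnergy (K := K) (hasDerivAt_tiltedMag β x)).continuousAt

lemma reducedFreeEnergy_neg (β K x : ℝ) :
    reducedFreeEnergy β K (-x) = reducedFreeEnergy β K x := by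
  simp only [reducedFreeEnergy, gibbsBound, tiltedMag, partitionFn_neg, sinh_neg]
  ring

/-- The coupling `K` for which `x > 0` is a critical point of `reducedFreeEnergy β K`. -/
def critCoupling (β x : ℝ) : ℝ := x * partitionFn β x / (4 * β * exp (-β) * sinh x)

lemma sub_mul_tiltedMag_eq (hβ : 0 < β) (hx : 0 < x) (K : ℝ) :
    x - 2 * β * K * tiltedMag β x =
      4 * β * exp (-β) * sinh x / partitionFn β x * (critCoupling β x - K) := by
  have := (sinh_pos_iff.2 hx).ne'
  have := (partitionFn_pos β x).ne'
  rw [tiltedMag, critCoupling]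
  field_simp
  ring

lemma Kc2_lt_critCoupling (hβ0 : 0 < β) (hβ : β ≤ log 4) (hx : 0 < x) :
    Kc2 β < critCoupling β x := by
  have hc := one_div_four_le_exp_neg hβ
  have hs := sinh_pos_iff.2 hx
  rw [Kc2_eq, critCoupling, div_lt_div_iff₀ (by positivity) (by positivity),
    partitionFn, partitionFn, cosh_zero]
  have key : (1 + 2 * exp (-β)) * sinh x < x * (1 + 2 * exp (-β) * cosh x) := by
    nlinarith [three_mul_sinh_lt_mul_cosh_add_two hx,
      mul_nonneg (sub_nonneg.2 hc) (sub_nonneg.2 (sinh_lt_mul_cosh hx).le)]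
  nlinarith [mul_lt_mul_of_pos_right key (by positivity : 0 < 4 * β * exp (-β))]

lemma critCoupling_lt_partitionFn_div (hβ : 0 < β) (hx : 0 < x) :
    critCoupling β x < partitionFn β x / (4 * β * exp (-β)) := by
  have hs := sinh_pos_iff.2 hx
  have hZ := partitionFn_pos β x
  rw [critCoupling, div_lt_div_iff₀ (by positivity) (by positivity)]
  nlinarith [mul_lt_mul_of_pos_left (self_lt_sinh_iff.2 hx)
    (by positivity : 0 < partitionFn β x * (4 * β * exp (-β)))]

lemma div_lt_critCoupling (hβ : 0 < β) (hx : 0 < x) : x / (2 * β) < critCoupling β x := by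
  have hs := sinh_pos_iff.2 hx
  rw [critCoupling, div_lt_div_iff₀ (by positivity) (by positivity), partitionFn]
  nlinarith [mul_lt_mul_of_pos_left (sinh_lt_cosh x) (by positivity : 0 < 4 * β * x * exp (-β))]

lemma continuousOn_critCoupling (hβ : 0 < β) : ContinuousOn (critCoupling β) (Ioi 0) :=
  ((continuous_id.mul (continuous_partitionFn β)).continuousOn.div (by fun_prop))
    fun x hx => by
      have := sinh_pos_iff.2 hx
      positivity

lemma strictMonoOn_critCoupling (hβ0 : 0 < β) (hβ : β ≤ log 4) :
    StrictMonoOn (critCoupling β) (Ioi 0) := by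
  have hc := one_div_four_le_exp_neg hβ
  refine strictMonoOn_of_deriv_pos (convex_Ioi 0) (continuousOn_critCoupling hβ0) fun x hx => ?_
  rw [interior_Ioi] at hx
  have hs := sinh_pos_iff.2 hx
  have hderiv : HasDerivAt (critCoupling β) _ x :=
    ((hasDerivAt_id' x).mul (hasDerivAt_partitionFn β x)).div
      ((hasDerivAt_sinh x).const_mul (4 * β * exp (-β))) (by positivity)
  rw [hderiv.deriv, Pi.mul_apply]
  refine div_pos ?_ (by positivity)
  have hnum : (1 * partitionFn β x + x * (2 * exp (-β) * sinh x)) * (4 * β * exp (-β) * sinh x)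
      - x * partitionFn β x * (4 * β * exp (-β) * cosh x) = 4 * β * exp (-β) *
        ((sinh x - x * cosh x) + 2 * exp (-β) * (sinh x * cosh x - x)) := by
    rw [partitionFn]
    linear_combination (-8 * β * exp (-β) ^ 2 * x) * cosh_sq_sub_sinh_sq x
  have hsc : x < sinh x * cosh x := by nlinarith [self_lt_sinh_iff.2 hx, one_le_cosh x]
  rw [hnum]
  refine mul_pos (by positivity) ?_
  nlinarith [mul_two_mul_cosh_add_one_lt hx, mul_nonneg (sub_nonneg.2 hc) (sub_nonneg.2 hsc.le)]

lemma surjOn_critCoupling (hβ : 0 < β) : SurjOn (critCoupling β) (Ioi 0) (Ioi (Kc2 β)) := by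
  intro K (hK : Kc2 β < K)
  have hK0 : 0 < K := (Kc2_pos hβ).trans hK
  have hsmall : ∀ᶠ a in 𝓝[>] 0, partitionFn β a / (4 * β * exp (-β)) < K := by
    refine (((continuous_partitionFn β).div_const _).tendsto 0).eventually_lt_const ?_
      |>.filter_mono nhdsWithin_le_nhds
    rwa [← Kc2_eq]
  obtain ⟨a, ha, ha0⟩ := (hsmall.and self_mem_nhdsWithin).exists
  have hb0 : (0 : ℝ) < 2 * β * K := by positivity
  have hlt : critCoupling β a < K := (critCoupling_lt_partitionFn_div hβ ha0).trans ha
  have hgt : K < critCoupling β (2 * β * K) := by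
    simpa [hβ.ne'] using div_lt_critCoupling hβ hb0
  have hsub : uIcc a (2 * β * K) ⊆ Ioi 0 := fun y hy =>
    lt_of_lt_of_le (lt_min ha0 hb0) hy.1
  obtain ⟨y, hy, rfl⟩ := intermediate_value_uIcc ((continuousOn_critCoupling hβ).mono hsub)
    (mem_uIcc.2 (Or.inl ⟨hlt.le, hgt.le⟩))
  exact ⟨y, hsub hy, rfl⟩

lemma deriv_reducedFreeEnergy (hβ : 0 < β) (hx : 0 < x) :
    deriv (reducedFreeEnergy β K) x =
      2 * exp (-β) * (cosh x + 2 * exp (-β)) / partitionFn β x ^ 2 *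
        (4 * β * exp (-β) * sinh x / partitionFn β x) * (critCoupling β x - K) := by
  rw [(hasDerivAt_reducedFreeEnergy (hasDerivAt_tiltedMag β x)).deriv,
    sub_mul_tiltedMag_eq hβ hx]
  ring

lemma strictMonoOn_reducedFreeEnergy (hβ : 0 < β) {s : Set ℝ} (hs : Convex ℝ s)
    (hcrit : ∀ x ∈ interior s, 0 < x ∧ K < critCoupling β x) :
    StrictMonoOn (reducedFreeEnergy β K) s := by
  refine strictMonoOn_of_deriv_pos hs (continuous_reducedFreeEnergy β K).continuousOn
    fun x hx => ?_
  obtain ⟨hx0, hK⟩ := hcrit x hx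
  have := sinh_pos_iff.2 hx0
  have := partitionFn_pos β x
  have := cosh_pos x
  rw [deriv_reducedFreeEnergy hβ hx0]
  exact mul_pos (by positivity) (sub_pos.2 hK)

lemma strictAntiOn_reducedFreeEnergy (hβ : 0 < β) {s : Set ℝ} (hs : Convex ℝ s)
    (hcrit : ∀ x ∈ interior s, 0 < x ∧ critCoupling β x < K) :
    StrictAntiOn (reducedFreeEnergy β K) s := by
  refine strictAntiOn_of_deriv_neg hs (continuous_reducedFreeEnergy β K).continuousOn
    fun x hx => ?_
  obtain ⟨hx0, hK⟩ := hcrit x hx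
  have := sinh_pos_iff.2 hx0
  have := partitionFn_pos β x
  have := cosh_pos x
  rw [deriv_reducedFreeEnergy hβ hx0]
  exact mul_neg_of_pos_of_neg (by positivity) (sub_neg.2 hK)

theorem canonE_eq_singleton_rhoBeta (hβ0 : 0 < β) (hβ : β ≤ log 4) (hK0 : 0 < K)
    (hK : K ≤ Kc2 β) : canonE β K = {rhoBeta β} := by
  have hmono : StrictMonoOn (reducedFreeEnergy β K) (Ici 0) :=
    strictMonoOn_reducedFreeEnergy hβ0 (convex_Ici 0) fun x hx => by
      rw [interior_Ici] at hx
      exact ⟨hx, hK.trans_lt (Kc2_lt_critCoupling hβ0 hβ hx)⟩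
  rw [canonE_eq_image_minimizers (by positivity), setOf_forall_le_eq_pair_of_even le_rfl
    (reducedFreeEnergy_neg β K) (by simp) hmono, neg_zero, pair_eq_singleton, image_singleton,
    tilted_zero]

def critPoint (β K : ℝ) : ℝ := invFunOn (critCoupling β) (Ioi 0) K

lemma critPoint_spec (hβ : 0 < β) (hK : Kc2 β < K) :
    0 < critPoint β K ∧ critCoupling β (critPoint β K) = K :=
  invFunOn_pos (surjOn_critCoupling hβ hK)

lemma continuousOn_critPoint (hβ0 : 0 < β) (hβ : β ≤ log 4) :
    ContinuousOn (critPoint β) (Ioi (Kc2 β)) :=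
  (strictMonoOn_critCoupling hβ0 hβ).continuousOn_invFunOn_Ioi
    (fun _ hx => Kc2_lt_critCoupling hβ0 hβ hx) (surjOn_critCoupling hβ0)

lemma tendsto_critPoint (hβ0 : 0 < β) (hβ : β ≤ log 4) :
    Tendsto (critPoint β) (𝓝[>] (Kc2 β)) (𝓝 0) :=
  (strictMonoOn_critCoupling hβ0 hβ).tendsto_invFunOn_nhdsGT
    (fun _ hx => Kc2_lt_critCoupling hβ0 hβ hx) (surjOn_critCoupling hβ0)

theorem canonE_eq_pair (hβ0 : 0 < β) (hβ : β ≤ log 4) (hK : Kc2 β < K) :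
    canonE β K = {tilted β (critPoint β K), tilted β (-critPoint β K)} := by
  obtain ⟨ht, hcrit⟩ := critPoint_spec hβ0 hK
  have hcoupling := strictMonoOn_critCoupling hβ0 hβ
  have hanti : StrictAntiOn (reducedFreeEnergy β K) (Icc 0 (critPoint β K)) :=
    strictAntiOn_reducedFreeEnergy hβ0 (convex_Icc _ _) fun x hx => by
      rw [interior_Icc] at hx
      exact ⟨hx.1, hcrit ▸ hcoupling hx.1 ht hx.2⟩
  have hmono : StrictMonoOn (reducedFreeEnergy β K) (Ici (critPoint β K)) :=
    strictMonoOn_reducedFreeEnergy hβ0 (convex_Ici _) fun x hx => by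
      rw [interior_Ici] at hx
      exact ⟨ht.trans hx, hcrit ▸ hcoupling ht (ht.trans hx) hx⟩
  rw [canonE_eq_image_minimizers (mul_pos hβ0 ((Kc2_pos hβ0).trans hK)).le,
    setOf_forall_le_eq_pair_of_even ht.le (reducedFreeEnergy_neg β K) hanti hmono, image_pair]

end BlumeCapel

open BlumeCapel

/-- Fix `0 < β ≤ log 4`.  (a) For `0 < K ≤ K_c^{(2)}(β)`,
`E_{β,K} = {ρ_β}`.  (b) For `K > K_c^{(2)}(β)` there are `ν⁺ ≠ ν⁻`, both different
from `ρ_β`, with `E_{β,K} = {ν⁺, ν⁻}` and `ν⁻` obtained from `ν⁺` by interchanging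
the components at `−1` and at `1`.  (c) `ν⁺, ν⁻` can be chosen continuously in
`K ∈ (K_c^{(2)}(β), ∞)` with `ν^± → ρ_β` as `K → K_c^{(2)}(β)⁺`. -/
theorem canonE_structure_second_order (β : ℝ) (hβ0 : 0 < β) (hβ : β ≤ Real.log 4) :
    (∀ K : ℝ, 0 < K → K ≤ Kc2 β → canonE β K = {rhoBeta β}) ∧
    ∃ νp νm : ℝ → ℝ × ℝ × ℝ,
      (∀ K : ℝ, Kc2 β < K →
        νp K ≠ νm K ∧ νp K ≠ rhoBeta β ∧ νm K ≠ rhoBeta β ∧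
        canonE β K = {νp K, νm K} ∧
        (νm K).1 = (νp K).2.2 ∧ (νm K).2.1 = (νp K).2.1 ∧ (νm K).2.2 = (νp K).1) ∧
      ContinuousOn νp (Set.Ioi (Kc2 β)) ∧ ContinuousOn νm (Set.Ioi (Kc2 β)) ∧
      Filter.Tendsto νp (nhdsWithin (Kc2 β) (Set.Ioi (Kc2 β))) (nhds (rhoBeta β)) ∧
      Filter.Tendsto νm (nhdsWithin (Kc2 β) (Set.Ioi (Kc2 β))) (nhds (rhoBeta β)) := by
  refine ⟨fun K hK0 hK => canonE_eq_singleton_rhoBeta hβ0 hβ hK0 hK,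
    fun K => tilted β (critPoint β K), fun K => tilted β (-critPoint β K),
    fun K hK => ?_, ?_, ?_, ?_, ?_⟩
  · have hx := (critPoint_spec hβ0 hK).1
    have hswap := tilted_neg β (critPoint β K)
    rw [← tilted_zero]
    refine ⟨(tilted_injective β).ne (by linarith), (tilted_injective β).ne hx.ne',
      (tilted_injective β).ne (neg_ne_zero.2 hx.ne'), canonE_eq_pair hβ0 hβ hK, ?_, ?_, ?_⟩ <;>
      simp only [hswap]
  · exact (continuous_tilted β).comp_continuousOn (continuousOn_critPoint hβ0 hβ)
  · exact (continuous_tilted β).comp_continuousOn (continuousOn_critPoint hβ0 hβ).neg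
  · rw [← tilted_zero]
    exact ((continuous_tilted β).tendsto 0).comp (tendsto_critPoint hβ0 hβ)
  · rw [← tilted_zero, ← neg_zero]
    exact ((continuous_tilted β).tendsto _).comp (tendsto_critPoint hβ0 hβ).neg
end
end

section
/- Fix β > 0 and K > 0 and suppose Ẽ_{β,K} = {z_1, ..., z_r} with r ∈ {1, 2, 3}. For z ∈ ℝ define ν_z ∈ P by ν_z(i) = e^{2βK z · i} ρ_β(i) / Σ_{j∈{−1,0,1}} e^{2βK z · j} ρ_β(j) for i ∈ {−1,0,1}. Then: (1) for each k, t_k = 2βK z_k is the unique t ∈ ℝ such that the tilted measure with mass proportional to e^{t·i} ρ_β(i) has mean z_k, so in particular the mean of ν_{z_k} equals z_k; (2) the measures ν_{z_1}, ..., ν_{z_r} are pairwise distinct; (3) E_{β,K} = {ν_{z_1}, ..., ν_{z_r}}. -/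
noncomputable section

/-- `c_β(t) = log[(1 + e^{−β}(e^t + e^{−t}))/(1 + 2e^{−β})]`. -/
def cBeta (β t : ℝ) : ℝ :=
  Real.log ((1 + Real.exp (-β) * (Real.exp t + Real.exp (-t))) / (1 + 2 * Real.exp (-β)))

/-- `J_β(z) = sup_{t ∈ ℝ} {t z − c_β(t)}`, the Legendre–Fenchel transform of `c_β`. -/
def Jbeta (β z : ℝ) : ℝ := ⨆ t : ℝ, (t * z - cBeta β t)

/-- `Ẽ_{β,K}`: the set of `z ∈ [-1,1]` minimizing `J_β(z) − βK z²` over `[-1,1]`. -/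
def tildeE (β K : ℝ) : Set ℝ :=
  {z | z ∈ Set.Icc (-1 : ℝ) 1 ∧
    ∀ y ∈ Set.Icc (-1 : ℝ) 1, Jbeta β z - β * K * z ^ 2 ≤ Jbeta β y - β * K * y ^ 2}

/-- The tilted measure with mass at `i ∈ {-1,0,1}` proportional to `e^{t·i} ρ_β(i)`. -/
def tilted (β t : ℝ) : ℝ × ℝ × ℝ :=
  (Real.exp (-t) * (rhoBeta β).1 /
      (Real.exp (-t) * (rhoBeta β).1 + (rhoBeta β).2.1 + Real.exp t * (rhoBeta β).2.2),
   (rhoBeta β).2.1 /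
      (Real.exp (-t) * (rhoBeta β).1 + (rhoBeta β).2.1 + Real.exp t * (rhoBeta β).2.2),
   Real.exp t * (rhoBeta β).2.2 /
      (Real.exp (-t) * (rhoBeta β).1 + (rhoBeta β).2.1 + Real.exp t * (rhoBeta β).2.2))

/-- The mean `μ₁ − μ₋₁` of a probability vector `μ = (μ₋₁, μ₀, μ₁)`. -/
def meanPV (μ : ℝ × ℝ × ℝ) : ℝ := μ.2.2 - μ.1

/-!
Up to an additive constant, `relEntUnif μ + β fK K μ` equals `H(μ | ρ_β) - βK m(μ)²`, where `H` is
relative entropy and `m` the mean. Gibbs' inequality `H(μ | ρ_{β,t}) ≥ 0` for the exponential tilts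
`ρ_{β,t}` of `ρ_β` gives `J_β(m(μ)) ≤ H(μ | ρ_β)`, with equality at `μ = ρ_{β,t}`; so the canonical
free energy `F` and `J_β(z) - βK z²` have the same infimum. The identity
`F(μ) = F(ρ_{β,t}) + H(μ | ρ_{β,t}) + βK (m(μ) - m(ρ_{β,t}))²` for `t = 2βK m(μ)` then shows that
every canonical minimizer is the tilt `ρ_{β,2βK m(μ)}`, which yields both the self-consistency
`m(ν_z) = z` on `Ẽ_{β,K}` and `E_{β,K} = {ν_z}`. The tilt parameter is recovered from the mean
because `H(ρ_{β,s} | ρ_{β,t}) + H(ρ_{β,t} | ρ_{β,s}) = (s - t)(m(ρ_{β,s}) - m(ρ_{β,t}))`.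
-/

open Real Set InformationTheory

def IsPosVec (ν : ℝ × ℝ × ℝ) : Prop :=
  0 < ν.1 ∧ 0 < ν.2.1 ∧ 0 < ν.2.2

def relEnt (μ ν : ℝ × ℝ × ℝ) : ℝ :=
  μ.1 * log (μ.1 / ν.1) + μ.2.1 * log (μ.2.1 / ν.2.1) + μ.2.2 * log (μ.2.2 / ν.2.2)

section RelEnt

variable {μ ν : ℝ × ℝ × ℝ}

lemma meanPV_mem_Icc (hμ : IsProbVec μ) : meanPV μ ∈ Icc (-1) 1 := by
  obtain ⟨h1, h2, h3, hsum⟩ := hμ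
  constructor <;> unfold meanPV <;> linarith

lemma meanPV_mem_Ioo (hμ : IsProbVec μ) (hμ₀ : IsPosVec μ) : meanPV μ ∈ Ioo (-1) 1 := by
  obtain ⟨h1, h2, h3, hsum⟩ := hμ
  obtain ⟨p1, p2, p3⟩ := hμ₀
  constructor <;> unfold meanPV <;> linarith

lemma mul_log_div_mul (x : ℝ) {c y : ℝ} (hc : c ≠ 0) (hy : y ≠ 0) :
    x * log (x / (c * y)) = x * log (x / y) - x * log c := by
  rcases eq_or_ne x 0 with rfl | hx
  · simp
  · rw [log_div hx (mul_ne_zero hc hy), log_mul hc hy, log_div hx hy]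
    ring

lemma mul_log_div_eq_mul_klFun (p : ℝ) {q : ℝ} (hq : q ≠ 0) :
    p * log (p / q) = q * klFun (p / q) + (p - q) := by
  rw [klFun_apply]
  field_simp
  ring

lemma eq_of_mul_klFun_div_eq_zero {p q : ℝ} (hp : 0 ≤ p) (hq : 0 < q)
    (h : q * klFun (p / q) = 0) : p = q := by
  rw [mul_eq_zero, klFun_eq_zero_iff (div_nonneg hp hq.le), div_eq_one_iff_eq hq.ne'] at h
  exact h.resolve_left hq.ne'

lemma relEnt_eq_sum_klFun (hμ : IsProbVec μ) (hν : IsProbVec ν) (hν₀ : IsPosVec ν) :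
    relEnt μ ν = ν.1 * klFun (μ.1 / ν.1) + ν.2.1 * klFun (μ.2.1 / ν.2.1)
      + ν.2.2 * klFun (μ.2.2 / ν.2.2) := by
  obtain ⟨h1, h2, h3⟩ := hν₀
  rw [relEnt, mul_log_div_eq_mul_klFun _ h1.ne', mul_log_div_eq_mul_klFun _ h2.ne',
    mul_log_div_eq_mul_klFun _ h3.ne']
  linear_combination hμ.2.2.2 - hν.2.2.2

theorem relEnt_nonneg (hμ : IsProbVec μ) (hν : IsProbVec ν) (hν₀ : IsPosVec ν) :
    0 ≤ relEnt μ ν := by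
  obtain ⟨h1, h2, h3⟩ := hν₀
  have k1 := klFun_nonneg (div_nonneg hμ.1 h1.le)
  have k2 := klFun_nonneg (div_nonneg hμ.2.1 h2.le)
  have k3 := klFun_nonneg (div_nonneg hμ.2.2.1 h3.le)
  rw [relEnt_eq_sum_klFun hμ hν ⟨h1, h2, h3⟩]
  positivity

theorem eq_of_relEnt_eq_zero (hμ : IsProbVec μ) (hν : IsProbVec ν) (hν₀ : IsPosVec ν)
    (h : relEnt μ ν = 0) : μ = ν := by
  obtain ⟨h1, h2, h3⟩ := hν₀
  have k1 := mul_nonneg h1.le (klFun_nonneg (div_nonneg hμ.1 h1.le))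
  have k2 := mul_nonneg h2.le (klFun_nonneg (div_nonneg hμ.2.1 h2.le))
  have k3 := mul_nonneg h3.le (klFun_nonneg (div_nonneg hμ.2.2.1 h3.le))
  rw [relEnt_eq_sum_klFun hμ hν ⟨h1, h2, h3⟩, add_eq_zero_iff_of_nonneg (add_nonneg k1 k2) k3,
    add_eq_zero_iff_of_nonneg k1 k2] at h
  obtain ⟨⟨e1, e2⟩, e3⟩ := h
  exact Prod.ext (eq_of_mul_klFun_div_eq_zero hμ.1 h1 e1)
    (Prod.ext (eq_of_mul_klFun_div_eq_zero hμ.2.1 h2 e2)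
      (eq_of_mul_klFun_div_eq_zero hμ.2.2.1 h3 e3))

lemma relEnt_self (hν : IsPosVec ν) : relEnt ν ν = 0 := by
  simp [relEnt, div_self hν.1.ne', div_self hν.2.1.ne', div_self hν.2.2.ne']

end RelEnt

def partitionFn (ρ : ℝ × ℝ × ℝ) (t : ℝ) : ℝ :=
  exp (-t) * ρ.1 + ρ.2.1 + exp t * ρ.2.2

def tilt (ρ : ℝ × ℝ × ℝ) (t : ℝ) : ℝ × ℝ × ℝ :=
  (exp (-t) * ρ.1 / partitionFn ρ t, ρ.2.1 / partitionFn ρ t, exp t * ρ.2.2 / partitionFn ρ t)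

section Tilt

variable {ρ : ℝ × ℝ × ℝ}

lemma partitionFn_pos (hρ : IsPosVec ρ) (t : ℝ) : 0 < partitionFn ρ t := by
  obtain ⟨h1, h2, h3⟩ := hρ
  unfold partitionFn
  positivity

lemma tilt_isPosVec (hρ : IsPosVec ρ) (t : ℝ) : IsPosVec (tilt ρ t) := by
  have hZ := partitionFn_pos hρ t
  obtain ⟨h1, h2, h3⟩ := hρ
  refine ⟨?_, ?_, ?_⟩ <;> (unfold tilt; positivity)

lemma tilt_isProbVec (hρ : IsPosVec ρ) (t : ℝ) : IsProbVec (tilt ρ t) := by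
  obtain ⟨h1, h2, h3⟩ := tilt_isPosVec hρ t
  refine ⟨h1.le, h2.le, h3.le, ?_⟩
  simp only [tilt]
  rw [← add_div, ← add_div]
  exact div_self (partitionFn_pos hρ t).ne'

lemma relEnt_tilt (hρ : IsPosVec ρ) {μ : ℝ × ℝ × ℝ} (hμ : IsProbVec μ) (t : ℝ) :
    relEnt μ (tilt ρ t) = relEnt μ ρ - (t * meanPV μ - log (partitionFn ρ t)) := by
  obtain ⟨h1, h2, h3⟩ := hρ
  have hZ := (partitionFn_pos ⟨h1, h2, h3⟩ t).ne'
  have htilt : tilt ρ t = ((exp (-t) / partitionFn ρ t) * ρ.1, (1 / partitionFn ρ t) * ρ.2.1,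
      (exp t / partitionFn ρ t) * ρ.2.2) := by
    simp only [tilt, div_mul_eq_mul_div, one_mul]
  rw [relEnt, htilt, mul_log_div_mul _ (by positivity) h1.ne',
    mul_log_div_mul _ (by positivity) h2.ne', mul_log_div_mul _ (by positivity) h3.ne',
    log_div (exp_ne_zero _) hZ, log_div one_ne_zero hZ, log_div (exp_ne_zero _) hZ, log_exp,
    log_exp, log_one, relEnt, meanPV]
  linear_combination log (partitionFn ρ t) * hμ.2.2.2

lemma relEnt_tilt_self (hρ : IsPosVec ρ) (t : ℝ) :
    relEnt (tilt ρ t) ρ = t * meanPV (tilt ρ t) - log (partitionFn ρ t) := by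
  have h := relEnt_tilt hρ (tilt_isProbVec hρ t) t
  rw [relEnt_self (tilt_isPosVec hρ t)] at h
  linarith

theorem mul_meanPV_sub_log_partitionFn_le_relEnt (hρ : IsPosVec ρ) {μ : ℝ × ℝ × ℝ}
    (hμ : IsProbVec μ) (t : ℝ) : t * meanPV μ - log (partitionFn ρ t) ≤ relEnt μ ρ := by
  have h := relEnt_nonneg hμ (tilt_isProbVec hρ t) (tilt_isPosVec hρ t)
  rw [relEnt_tilt hρ hμ] at h
  linarith

lemma relEnt_tilt_add_relEnt_tilt (hρ : IsPosVec ρ) (s t : ℝ) :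
    relEnt (tilt ρ s) (tilt ρ t) + relEnt (tilt ρ t) (tilt ρ s)
      = (s - t) * (meanPV (tilt ρ s) - meanPV (tilt ρ t)) := by
  rw [relEnt_tilt hρ (tilt_isProbVec hρ s), relEnt_tilt hρ (tilt_isProbVec hρ t),
    relEnt_tilt_self hρ, relEnt_tilt_self hρ]
  ring

lemma tilt_injective (hρ : IsPosVec ρ) : Function.Injective (tilt ρ) := by
  intro s t h
  have hs := (partitionFn_pos hρ s).ne'
  have ht := (partitionFn_pos hρ t).ne'
  have hratio := congrArg (fun μ => μ.2.2 / μ.2.1) h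
  simp only [tilt] at hratio
  field_simp [hρ.2.1.ne', hρ.2.2.ne'] at hratio
  exact exp_injective hratio

theorem meanPV_tilt_injective (hρ : IsPosVec ρ) :
    Function.Injective (fun t => meanPV (tilt ρ t)) := by
  intro s t h
  have hsum := relEnt_tilt_add_relEnt_tilt hρ s t
  simp only at h
  rw [h, sub_self, mul_zero] at hsum
  have h₁ := relEnt_nonneg (tilt_isProbVec hρ s) (tilt_isProbVec hρ t) (tilt_isPosVec hρ t)
  have h₂ := relEnt_nonneg (tilt_isProbVec hρ t) (tilt_isProbVec hρ s) (tilt_isPosVec hρ s)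
  exact tilt_injective hρ (eq_of_relEnt_eq_zero (tilt_isProbVec hρ s) (tilt_isProbVec hρ t)
    (tilt_isPosVec hρ t) (by linarith))

lemma continuous_meanPV_tilt (hρ : IsPosVec ρ) : Continuous (fun t => meanPV (tilt ρ t)) := by
  have hZ : ∀ t, partitionFn ρ t ≠ 0 := fun t => (partitionFn_pos hρ t).ne'
  unfold meanPV tilt partitionFn at *
  fun_prop (disch := exact hZ)

lemma exists_le_meanPV_tilt (hρ : IsPosVec ρ) {z : ℝ} (hz : z < 1) :
    ∃ t, z ≤ meanPV (tilt ρ t) := by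
  obtain ⟨h1, h2, h3⟩ := hρ
  have hz' : 0 < 1 - z := by linarith
  -- Chosen so that `eᵗ ρ.2.2 (1 - z) ≥ ρ.2.1 + 2 ρ.1 ≥ z ρ.2.1 + e⁻ᵗ ρ.1 (1 + z)`.
  set t := (ρ.2.1 + 2 * ρ.1) / (ρ.2.2 * (1 - z))
  have ht : 0 ≤ t := by positivity
  have hexp : t * (ρ.2.2 * (1 - z)) ≤ exp t * (ρ.2.2 * (1 - z)) := by
    have := add_one_le_exp t
    gcongr
    linarith
  have hexp' : exp (-t) ≤ 1 := exp_le_one_iff.2 (by linarith)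
  have hdiv : t * (ρ.2.2 * (1 - z)) = ρ.2.1 + 2 * ρ.1 := div_mul_cancel₀ _ (by positivity)
  refine ⟨t, ?_⟩
  rw [meanPV, tilt, ← sub_div, le_div_iff₀ (partitionFn_pos ⟨h1, h2, h3⟩ t), partitionFn]
  nlinarith [mul_le_mul_of_nonneg_left hexp' h1.le, mul_nonneg hz'.le h2.le,
    mul_nonneg (mul_pos (exp_pos (-t)) h1).le hz'.le]

lemma meanPV_tilt_neg (ρ : ℝ × ℝ × ℝ) (t : ℝ) :
    meanPV (tilt ρ (-t)) = -meanPV (tilt (ρ.2.2, ρ.2.1, ρ.1) t) := by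
  simp only [meanPV, tilt, partitionFn, neg_neg]
  ring

lemma exists_meanPV_tilt_eq (hρ : IsPosVec ρ) {z : ℝ} (hz : z ∈ Ioo (-1) 1) :
    ∃ t, meanPV (tilt ρ t) = z := by
  refine mem_range_of_exists_le_of_exists_ge (continuous_meanPV_tilt hρ) ?_
    (exists_le_meanPV_tilt hρ hz.2)
  obtain ⟨t, ht⟩ := exists_le_meanPV_tilt (ρ := (ρ.2.2, ρ.2.1, ρ.1))
    ⟨hρ.2.2, hρ.2.1, hρ.1⟩ (neg_lt.1 hz.1)
  exact ⟨-t, by rw [meanPV_tilt_neg]; linarith⟩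

end Tilt

section Beta

variable {β : ℝ}

lemma rhoBeta_isPosVec (β : ℝ) : IsPosVec (rhoBeta β) := by
  refine ⟨?_, ?_, ?_⟩ <;> (unfold rhoBeta; positivity)

lemma tilted_eq_tilt (β : ℝ) : tilted β = tilt (rhoBeta β) := rfl

lemma tilted_isPosVec (β t : ℝ) : IsPosVec (tilted β t) := tilt_isPosVec (rhoBeta_isPosVec β) t

lemma tilted_isProbVec (β t : ℝ) : IsProbVec (tilted β t) :=
  tilt_isProbVec (rhoBeta_isPosVec β) t

lemma cBeta_eq_log_partitionFn (β t : ℝ) : cBeta β t = log (partitionFn (rhoBeta β) t) := by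
  have : 0 < 1 + 2 * exp (-β) := by positivity
  rw [cBeta, partitionFn, rhoBeta]
  congr 1
  field_simp
  ring

lemma mul_sub_cBeta_le_relEnt {μ : ℝ × ℝ × ℝ} (hμ : IsProbVec μ) (t : ℝ) :
    t * meanPV μ - cBeta β t ≤ relEnt μ (rhoBeta β) := by
  rw [cBeta_eq_log_partitionFn]
  exact mul_meanPV_sub_log_partitionFn_le_relEnt (rhoBeta_isPosVec β) hμ t

lemma Jbeta_meanPV_le_relEnt {μ : ℝ × ℝ × ℝ} (hμ : IsProbVec μ) :
    Jbeta β (meanPV μ) ≤ relEnt μ (rhoBeta β) :=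
  ciSup_le (mul_sub_cBeta_le_relEnt hμ)

lemma le_Jbeta {z : ℝ} (hz : z ∈ Icc (-1) 1) (t : ℝ) : t * z - cBeta β t ≤ Jbeta β z := by
  have hμ : IsProbVec ((1 - z) / 2, 0, (1 + z) / 2) :=
    ⟨by simp only; linarith [hz.2], le_rfl, by simp only; linarith [hz.1], by simp only; ring⟩
  have hmean : meanPV ((1 - z) / 2, 0, (1 + z) / 2) = z := by simp only [meanPV]; ring
  rw [← hmean]
  exact le_ciSup ⟨_, forall_mem_range.2 (mul_sub_cBeta_le_relEnt hμ)⟩ t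

lemma relEnt_tilted_rhoBeta (β t : ℝ) :
    relEnt (tilted β t) (rhoBeta β) = t * meanPV (tilted β t) - cBeta β t := by
  rw [cBeta_eq_log_partitionFn]
  exact relEnt_tilt_self (rhoBeta_isPosVec β) t

lemma Jbeta_meanPV_tilted (t : ℝ) :
    Jbeta β (meanPV (tilted β t)) = t * meanPV (tilted β t) - cBeta β t := by
  have hμ := tilted_isProbVec β t
  refine le_antisymm ?_ (le_Jbeta (meanPV_mem_Icc hμ) t)
  rw [← relEnt_tilted_rhoBeta]
  exact Jbeta_meanPV_le_relEnt hμ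

end Beta

def freeEnergy (β K : ℝ) (μ : ℝ × ℝ × ℝ) : ℝ :=
  relEntUnif μ + β * fK K μ

section FreeEnergy

variable {β K : ℝ}

lemma freeEnergy_eq {μ : ℝ × ℝ × ℝ} (hμ : IsProbVec μ) :
    freeEnergy β K μ = relEnt μ (rhoBeta β) - β * K * meanPV μ ^ 2
      + log (3 / (1 + 2 * exp (-β))) := by
  set c := 3 / (1 + 2 * exp (-β))
  have hc : c ≠ 0 := by positivity
  have hrho : rhoBeta β = (exp (-β) * c * (1 / 3), c * (1 / 3), exp (-β) * c * (1 / 3)) := by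
    simp only [rhoBeta, c]
    ext <;> (simp only; ring)
  have hthird : (1 / 3 : ℝ) ≠ 0 := by norm_num
  have hunif : ∀ x : ℝ, x * log (3 * x) = x * log (x / (1 / 3)) := fun x => by
    rw [show x / (1 / 3) = 3 * x by ring]
  rw [freeEnergy, relEntUnif, fK, relEnt, meanPV, hrho, mul_log_div_mul _ (by positivity) hthird,
    mul_log_div_mul _ hc hthird, mul_log_div_mul _ (by positivity) hthird,
    log_mul (exp_ne_zero _) hc, log_exp, hunif, hunif, hunif]
  linear_combination log c * hμ.2.2.2

lemma Jbeta_sub_le_freeEnergy {μ : ℝ × ℝ × ℝ} (hμ : IsProbVec μ) :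
    Jbeta β (meanPV μ) - β * K * meanPV μ ^ 2 + log (3 / (1 + 2 * exp (-β)))
      ≤ freeEnergy β K μ := by
  rw [freeEnergy_eq hμ]
  linarith [Jbeta_meanPV_le_relEnt (β := β) hμ]

lemma freeEnergy_tilted (t : ℝ) :
    freeEnergy β K (tilted β t) = Jbeta β (meanPV (tilted β t))
      - β * K * meanPV (tilted β t) ^ 2 + log (3 / (1 + 2 * exp (-β))) := by
  rw [freeEnergy_eq (tilted_isProbVec β t), Jbeta_meanPV_tilted, relEnt_tilted_rhoBeta]

lemma freeEnergy_tilted_add_relEnt {μ : ℝ × ℝ × ℝ} (hμ : IsProbVec μ) :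
    freeEnergy β K (tilted β (2 * β * K * meanPV μ)) + relEnt μ (tilted β (2 * β * K * meanPV μ))
      + β * K * (meanPV μ - meanPV (tilted β (2 * β * K * meanPV μ))) ^ 2
      = freeEnergy β K μ := by
  have hρ := rhoBeta_isPosVec β
  rw [tilted_eq_tilt, freeEnergy_eq (tilt_isProbVec hρ _), freeEnergy_eq hμ, relEnt_tilt hρ hμ,
    relEnt_tilt_self hρ]
  ring

theorem eq_tilted_of_mem_canonE (hβK : 0 ≤ β * K) {μ : ℝ × ℝ × ℝ} (hμ : μ ∈ canonE β K) :
    μ = tilted β (2 * β * K * meanPV μ) := by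
  have hid := freeEnergy_tilted_add_relEnt (β := β) (K := K) hμ.1
  have hle : freeEnergy β K μ ≤ freeEnergy β K (tilted β (2 * β * K * meanPV μ)) :=
    hμ.2 _ (tilted_isProbVec β _)
  have hent := relEnt_nonneg hμ.1 (tilted_isProbVec β (2 * β * K * meanPV μ)) (tilted_isPosVec β _)
  have hsq : 0 ≤ β * K * (meanPV μ - meanPV (tilted β (2 * β * K * meanPV μ))) ^ 2 := by
    positivity
  exact eq_of_relEnt_eq_zero hμ.1 (tilted_isProbVec β _) (tilted_isPosVec β _) (by linarith)

end FreeEnergy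

section TildeE

variable {β K : ℝ}

lemma notMem_tildeE_of_sq_eq_one (hβK : 0 ≤ β * K) {σ : ℝ} (hσ : σ ^ 2 = 1) :
    σ ∉ tildeE β K := by
  rintro ⟨hσI, hmin⟩
  set T := σ * (2 * β * K + 1)
  set y := meanPV (tilted β T)
  have hy : y ∈ Ioo (-1) 1 := meanPV_mem_Ioo (tilted_isProbVec β T) (tilted_isPosVec β T)
  have hJσ := le_Jbeta (β := β) hσI T
  have hJy : Jbeta β y = T * y - cBeta β T := Jbeta_meanPV_tilted T
  have hG := hmin y (Ioo_subset_Icc_self hy)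
  -- Minimality at `σ` gives `(2βK + 1)(1 - σy) ≤ βK (1 - y²) = βK (1 - σy)(1 + σy) < 2βK (1 - σy)`.
  have hσy : 0 < 1 - σ * y := by nlinarith [hy.1, hy.2]
  nlinarith [mul_nonneg hβK (sq_nonneg (σ - y))]

lemma mem_Ioo_of_mem_tildeE (hβK : 0 ≤ β * K) {z : ℝ} (hz : z ∈ tildeE β K) :
    z ∈ Ioo (-1) 1 := by
  obtain ⟨h1, h2⟩ := hz.1
  refine ⟨lt_of_le_of_ne h1 ?_, lt_of_le_of_ne h2 ?_⟩ <;> rintro rfl <;>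
    exact notMem_tildeE_of_sq_eq_one hβK (by norm_num) hz

theorem tilted_mem_canonE_of_mem_tildeE (hβK : 0 ≤ β * K) {z : ℝ} (hz : z ∈ tildeE β K) :
    tilted β (2 * β * K * z) ∈ canonE β K ∧ meanPV (tilted β (2 * β * K * z)) = z := by
  obtain ⟨t, ht⟩ : ∃ t, meanPV (tilted β t) = z :=
    exists_meanPV_tilt_eq (rhoBeta_isPosVec β) (mem_Ioo_of_mem_tildeE hβK hz)
  have hmin : tilted β t ∈ canonE β K := by
    refine ⟨tilted_isProbVec β t, fun ν hν => ?_⟩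
    change freeEnergy β K (tilted β t) ≤ freeEnergy β K ν
    rw [freeEnergy_tilted, ht]
    linarith [Jbeta_sub_le_freeEnergy (β := β) (K := K) hν, hz.2 _ (meanPV_mem_Icc hν)]
  have hfix := eq_tilted_of_mem_canonE hβK hmin
  rw [ht] at hfix
  rw [← hfix]
  exact ⟨hmin, ht⟩

lemma meanPV_mem_tildeE_of_mem_canonE (hβK : 0 ≤ β * K) (hne : (tildeE β K).Nonempty)
    {μ : ℝ × ℝ × ℝ} (hμ : μ ∈ canonE β K) : meanPV μ ∈ tildeE β K := by
  obtain ⟨z, hz⟩ := hne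
  have hle : freeEnergy β K μ ≤ freeEnergy β K (tilted β (2 * β * K * z)) :=
    hμ.2 _ (tilted_isProbVec β _)
  rw [freeEnergy_tilted, (tilted_mem_canonE_of_mem_tildeE hβK hz).2] at hle
  refine ⟨meanPV_mem_Icc hμ.1, fun y hy => ?_⟩
  linarith [Jbeta_sub_le_freeEnergy (β := β) (K := K) hμ.1, hz.2 y hy]

theorem canonE_eq_image_tildeE (hβK : 0 ≤ β * K) (hne : (tildeE β K).Nonempty) :
    canonE β K = (fun z => tilted β (2 * β * K * z)) '' tildeE β K := by
  ext μ
  constructor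
  · intro hμ
    exact ⟨meanPV μ, meanPV_mem_tildeE_of_mem_canonE hβK hne hμ,
      (eq_tilted_of_mem_canonE hβK hμ).symm⟩
  · rintro ⟨z, hz, rfl⟩
    exact (tilted_mem_canonE_of_mem_tildeE hβK hz).1

end TildeE

/-- Suppose `Ẽ_{β,K} = {z_1, …, z_r}` with `r ∈ {1,2,3}` distinct
points, and set `ν_z := tilted β (2βKz)` (mass at `i` proportional to
`e^{2βKz·i} ρ_β(i)`).  Then (1) for each `k`, `t_k = 2βK z_k` is the unique `t` whose
tilted measure has mean `z_k`, so in particular `ν_{z_k}` has mean `z_k`; (2) the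
`ν_{z_k}` are pairwise distinct; (3) `E_{β,K} = {ν_{z_1}, …, ν_{z_r}}`. -/
theorem canonE_eq_tilted_of_tildeE (β K : ℝ) (hβ : 0 < β) (hK : 0 < K)
    (r : ℕ) (hr : r = 1 ∨ r = 2 ∨ r = 3) (zs : Fin r → ℝ)
    (hzs : Function.Injective zs) (hE : tildeE β K = Set.range zs) :
    (∀ k : Fin r,
      meanPV (tilted β (2 * β * K * zs k)) = zs k ∧
      ∀ t : ℝ, meanPV (tilted β t) = zs k → t = 2 * β * K * zs k) ∧
    Function.Injective (fun k : Fin r => tilted β (2 * β * K * zs k)) ∧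
    canonE β K = Set.range (fun k : Fin r => tilted β (2 * β * K * zs k)) := by
  have hβK : 0 ≤ β * K := (mul_pos hβ hK).le
  have hmem : ∀ k, zs k ∈ tildeE β K := fun k => hE ▸ mem_range_self k
  have hmean : ∀ k, meanPV (tilted β (2 * β * K * zs k)) = zs k :=
    fun k => (tilted_mem_canonE_of_mem_tildeE hβK (hmem k)).2
  have hne : (tildeE β K).Nonempty := ⟨_, hmem ⟨0, by omega⟩⟩
  refine ⟨fun k => ⟨hmean k, fun t ht => ?_⟩, fun j k h => hzs ?_, ?_⟩
  · exact meanPV_tilt_injective (rhoBeta_isPosVec β) (ht.trans (hmean k).symm)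
  · simpa only [hmean] using congrArg meanPV h
  · rw [canonE_eq_image_tildeE hβK hne, hE, ← range_comp]
    rfl
end
end
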